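/- arXiv:1305.6288 — 6 statements merged into one kernel-verified Lean document; each statement's English description precedes it below -/
import Mathlib

section
/- Let n ≥ 1 and let N be a permutation-invariant norm on ℝ^n. Then there exist n+1 points p_0, p_1, …, p_n in ℝ^n and a real number p > 0 such that N(p_i − p_j) = p for all i ≠ j; that is, the equilateral dimension of (ℝ^n, N) is at least n+1. -/
/-- `N` is a norm on `ℝ^n`. -/
def IsNorm {n : ℕ} (N : (Fin n → ℝ) → ℝ) : Prop :=
  (∀ x, N x = 0 ↔ x = 0) ∧
  (∀ (c : ℝ) (x : Fin n → ℝ), N (c • x) = |c| * N x) ∧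
  (∀ x y : Fin n → ℝ, N (x + y) ≤ N x + N y)

/-- `N` is permutation-invariant. -/
def PermInvariant {n : ℕ} (N : (Fin n → ℝ) → ℝ) : Prop :=
  ∀ (σ : Equiv.Perm (Fin n)) (x : Fin n → ℝ), N (fun i => x (σ i)) = N x

/-!
The standard basis vectors `e₁, …, eₙ` are pairwise at the same distance `d > 0`, because a
permutation of coordinates carries any pair `(eₐ, e_b)` to any other. By the same symmetry the
distance from `eₐ` to a point `t • 𝟙` of the diagonal does not depend on `a`, so it suffices to
find `t` with `N (e₁ - t • 𝟙) = d`. This follows from the intermediate value theorem: at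
`t = 1/n` we have `n • (e₁ - t • 𝟙) = ∑ₖ (e₁ - eₖ)`, whose norm is at most `n d`, and the
distance tends to infinity as `t → ∞`.
-/

open Filter

lemma Equiv.Perm.exists_apply_eq_and_apply_eq {α : Type*} [DecidableEq α] {a b c d : α}
    (hab : a ≠ b) (hcd : c ≠ d) : ∃ σ : Equiv.Perm α, σ a = c ∧ σ b = d := by
  set s := Equiv.swap a c
  have hsb : s b ≠ c := fun h => hab (s.injective ((Equiv.swap_apply_left a c).trans h.symm))
  refine ⟨s.trans (Equiv.swap (s b) d), ?_, Equiv.swap_apply_left _ _⟩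
  rw [Equiv.trans_apply, Equiv.swap_apply_left]
  exact Equiv.swap_apply_of_ne_of_ne hsb.symm hcd

variable {n : ℕ} {N : (Fin n → ℝ) → ℝ}

namespace IsNorm

variable (hN : IsNorm N)
include hN

lemma map_zero : N 0 = 0 := (hN.1 0).2 rfl

lemma map_neg (x : Fin n → ℝ) : N (-x) = N x := by
  simpa using hN.2.1 (-1) x

lemma map_sub_comm (x y : Fin n → ℝ) : N (x - y) = N (y - x) := by
  rw [← hN.map_neg, neg_sub]

lemma nonneg (x : Fin n → ℝ) : 0 ≤ N x := by
  have h := hN.2.2 x (-x)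
  rw [add_neg_cancel, hN.map_zero, hN.map_neg] at h
  linarith

lemma pos {x : Fin n → ℝ} (hx : x ≠ 0) : 0 < N x :=
  (hN.nonneg x).lt_of_ne' (mt (hN.1 x).1 hx)

lemma map_sum_le {ι : Type*} (s : Finset ι) (f : ι → Fin n → ℝ) :
    N (∑ i ∈ s, f i) ≤ ∑ i ∈ s, N (f i) :=
  Finset.le_sum_of_subadditive N hN.map_zero.le hN.2.2 s f

lemma lipschitzWith_sub_smul (x v : Fin n → ℝ) :
    LipschitzWith ⟨N v, hN.nonneg v⟩ fun t : ℝ => N (x - t • v) := by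
  refine LipschitzWith.of_le_add_mul _ fun s t => ?_
  have h := hN.2.2 (x - t • v) ((t - s) • v)
  rw [show x - t • v + (t - s) • v = x - s • v by module, hN.2.1, abs_sub_comm] at h
  change _ ≤ _ + N v * dist s t
  rw [Real.dist_eq]
  linarith

lemma tendsto_sub_smul_atTop (x : Fin n → ℝ) {v : Fin n → ℝ} (hv : v ≠ 0) :
    Tendsto (fun t : ℝ => N (x - t • v)) atTop atTop := by
  refine tendsto_atTop_mono (fun t => ?_)
    (tendsto_atTop_add_const_right _ (-N x) (tendsto_id.atTop_mul_const (hN.pos hv)))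
  change t * N v + -N x ≤ _
  have h := hN.2.2 (x - t • v) (-x)
  rw [show x - t • v + -x = -t • v by module, hN.2.1, abs_neg, hN.map_neg] at h
  have := le_abs_self t
  nlinarith [hN.nonneg v]

lemma exists_sub_smul_eq {x v : Fin n → ℝ} (hv : v ≠ 0) {t₀ d : ℝ} (h : N (x - t₀ • v) ≤ d) :
    ∃ t : ℝ, N (x - t • v) = d := by
  obtain ⟨t, -, ht⟩ := intermediate_value_Ici
    (hN.lipschitzWith_sub_smul x v).continuous.continuousOn (hN.tendsto_sub_smul_atTop x hv) h
  exact ⟨t, ht⟩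

end IsNorm

def IsEquilateral {m : ℕ} (N : (Fin n → ℝ) → ℝ) (p : Fin m → Fin n → ℝ) (d : ℝ) : Prop :=
  ∀ i j, i ≠ j → N (p i - p j) = d

namespace IsEquilateral

lemma cons (hN : IsNorm N) {m : ℕ} {p : Fin m → Fin n → ℝ} {d : ℝ} (hp : IsEquilateral N p d)
    {x : Fin n → ℝ} (hx : ∀ i, N (p i - x) = d) :
    IsEquilateral N (Fin.cons x p : Fin (m + 1) → Fin n → ℝ) d := by
  intro i j hij
  cases i using Fin.cases <;> cases j using Fin.cases
  · exact absurd rfl hij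
  · rw [Fin.cons_zero, Fin.cons_succ, hN.map_sub_comm, hx]
  · rw [Fin.cons_zero, Fin.cons_succ, hx]
  · exact hp _ _ fun h => hij (congrArg Fin.succ h)

lemma map_single_sub_inv_smul_one_le (hN : IsNorm N) {d : ℝ}
    (h : IsEquilateral N (fun i => Pi.single i 1) d) (hd : 0 ≤ d) (a : Fin n) :
    N (Pi.single a 1 - (n : ℝ)⁻¹ • 1) ≤ d := by
  have hn : (0 : ℝ) < n := Nat.cast_pos.2 (Fin.pos a)
  have hsum : ∑ k, (Pi.single a 1 - Pi.single k 1 : Fin n → ℝ) = (n : ℝ) • Pi.single a 1 - 1 := by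
    rw [Finset.sum_sub_distrib, Finset.sum_const, Finset.card_univ, Fintype.card_fin,
      ← Nat.cast_smul_eq_nsmul ℝ, Finset.univ_sum_single fun _ => (1 : ℝ)]
    rfl
  have hterm : ∀ k ∈ Finset.univ, N (Pi.single a 1 - Pi.single k 1) ≤ d := by
    intro k _
    rcases eq_or_ne a k with rfl | hak
    · rw [sub_self, hN.map_zero]; exact hd
    · exact (h a k hak).le
  have hbound : N ((n : ℝ) • Pi.single a 1 - 1) ≤ n * d := by
    calc N ((n : ℝ) • Pi.single a 1 - 1) ≤ ∑ k, N (Pi.single a 1 - Pi.single k 1) := by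
          rw [← hsum]; exact hN.map_sum_le _ _
      _ ≤ n * d := by simpa using Finset.sum_le_card_nsmul _ _ _ hterm
  rw [show (Pi.single a 1 - (n : ℝ)⁻¹ • 1 : Fin n → ℝ) = (n : ℝ)⁻¹ • ((n : ℝ) • Pi.single a 1 - 1)
    by rw [smul_sub, inv_smul_smul₀ hn.ne'], hN.2.1, abs_inv, Nat.abs_cast]
  rw [inv_mul_le_iff₀ hn]
  exact hbound

end IsEquilateral

namespace PermInvariant

variable (hperm : PermInvariant N)
include hperm

lemma isEquilateral_single {a b : Fin n} (hab : a ≠ b) :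
    IsEquilateral N (fun i => Pi.single i 1) (N (Pi.single a 1 - Pi.single b 1)) := by
  intro i j hij
  obtain ⟨σ, rfl, rfl⟩ := Equiv.Perm.exists_apply_eq_and_apply_eq hab hij
  rw [← hperm σ]
  congr 1
  ext k
  simp [Pi.single_apply]

lemma map_single_sub_smul_one (a b : Fin n) (t : ℝ) :
    N (Pi.single a 1 - t • 1) = N (Pi.single b 1 - t • 1) := by
  rw [← hperm (Equiv.swap a b)]
  congr 1
  ext k
  simp [Pi.single_apply, Equiv.swap_apply_eq_iff]

lemma exists_pos_isEquilateral_single (hN : IsNorm N) :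
    ∃ d, 0 < d ∧ IsEquilateral N (fun i => Pi.single i 1) d := by
  by_cases h : ∃ a b : Fin n, a ≠ b
  · obtain ⟨a, b, hab⟩ := h
    have hne : (Pi.single a 1 - Pi.single b 1 : Fin n → ℝ) ≠ 0 := fun h0 => by
      simpa [hab] using congrFun h0 a
    exact ⟨_, hN.pos hne, hperm.isEquilateral_single hab⟩
  · push Not at h
    exact ⟨1, one_pos, fun i j hij => absurd (h i j) hij⟩

lemma exists_forall_single_sub_smul_one_eq (hN : IsNorm N) {d : ℝ}
    (hsingle : IsEquilateral N (fun i => Pi.single i 1) d) (hd : 0 ≤ d) :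
    ∃ t : ℝ, ∀ b, N (Pi.single b 1 - t • 1) = d := by
  rcases isEmpty_or_nonempty (Fin n) with hempty | hne
  · exact ⟨0, isEmptyElim⟩
  obtain ⟨a⟩ := id hne
  obtain ⟨t, ht⟩ := hN.exists_sub_smul_eq one_ne_zero (hsingle.map_single_sub_inv_smul_one_le hN hd a)
  exact ⟨t, fun b => (hperm.map_single_sub_smul_one b a t).trans ht⟩

end PermInvariant

theorem equilateral_dimension_of_permInvariant_general (n : ℕ)
    (N : (Fin n → ℝ) → ℝ) (hN : IsNorm N) (hperm : PermInvariant N) :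
    ∃ (p : Fin (n + 1) → (Fin n → ℝ)) (d : ℝ), 0 < d ∧
      ∀ i j : Fin (n + 1), i ≠ j → N (p i - p j) = d := by
  obtain ⟨d, hd, hsingle⟩ := hperm.exists_pos_isEquilateral_single hN
  obtain ⟨t, ht⟩ := hperm.exists_forall_single_sub_smul_one_eq hN hsingle hd.le
  exact ⟨_, d, hd, hsingle.cons hN ht⟩

/-- Any permutation-invariant norm on `ℝ^n` (with `n ≥ 1`) admits `n + 1` pairwise
equidistant points, i.e. the equilateral dimension of `(ℝ^n, N)` is at least `n + 1`. -/
theorem equilateral_dimension_of_permInvariant (n : ℕ) (hn : 1 ≤ n)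
    (N : (Fin n → ℝ) → ℝ) (hN : IsNorm N) (hperm : PermInvariant N) :
    ∃ (p : Fin (n + 1) → (Fin n → ℝ)) (d : ℝ), 0 < d ∧
      ∀ i j : Fin (n + 1), i ≠ j → N (p i - p j) = d :=
  equilateral_dimension_of_permInvariant_general n N hN hperm
end

section
/- Let n ≥ 2 and let N be a permutation-invariant norm on ℝ^n. Let e_1, …, e_n denote the standard basis vectors. Then there exists t ∈ ℝ such that N(t·(1,1,…,1) − e_i) = N(e_1 − e_2) for every i = 1, …, n. In particular, since N(e_i − e_j) = N(e_1 − e_2) for all i ≠ j by permutation invariance, the n+1 points e_1, …, e_n, t·(1,…,1) are pairwise equidistant in the norm N. -/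
namespace Seminorm

variable {E : Type*} [AddCommGroup E] [Module ℝ E] (q : Seminorm ℝ E)

lemma continuous_smul_sub (v w : E) : Continuous fun s : ℝ => q (s • v - w) := by
  refine (LipschitzWith.of_dist_le_mul (K := ⟨q v, apply_nonneg q v⟩) fun s s' => ?_).continuous
  rw [Real.dist_eq, Real.dist_eq]
  calc |q (s • v - w) - q (s' • v - w)| ≤ q (s • v - w - (s' • v - w)) := abs_sub_map_le_sub q _ _
    _ = q v * |s - s'| := by
      rw [sub_sub_sub_cancel_right, ← sub_smul, map_smul_eq_mul, Real.norm_eq_abs, mul_comm]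

lemma exists_apply_smul_sub_eq {v w : E} (hv : 0 < q v) {a c : ℝ} (ha : q (a • v - w) ≤ c) :
    ∃ t : ℝ, q (t • v - w) = c := by
  -- `b` is where the lower bound `|s| * q v - q w` of `q (s • v - w)` reaches `c`.
  set b := (c + q w) / q v
  have hb : c ≤ q (b • v - w) := by
    have hbv : b * q v = c + q w := div_mul_cancel₀ _ hv.ne'
    have htri : q (b • v) ≤ q (b • v - w) + q w := by
      simpa using map_add_le_add q (b • v - w) w
    rw [map_smul_eq_mul, Real.norm_eq_abs] at htri
    nlinarith [le_abs_self b]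
  exact intermediate_value_univ a b (q.continuous_smul_sub v w) ⟨ha, hb⟩

lemma apply_inv_card_smul_sub_single_le {ι : Type*} [Fintype ι] [DecidableEq ι]
    (q : Seminorm ℝ (ι → ℝ)) (k : ι) {c : ℝ} (hc : ∀ j, q (Pi.single j 1 - Pi.single k 1) ≤ c) :
    q ((Fintype.card ι : ℝ)⁻¹ • (fun _ => 1) - Pi.single k 1) ≤ c := by
  set m : ℝ := (Fintype.card ι : ℝ)
  have hm : 0 < m := by simp only [m, Nat.cast_pos, Fintype.card_pos_iff]; exact ⟨k⟩
  have hsum : ∑ j, (Pi.single j 1 - Pi.single k 1 : ι → ℝ) = (fun _ => 1) - m • Pi.single k 1 := by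
    rw [Finset.sum_sub_distrib, Finset.univ_sum_single (fun _ => (1 : ℝ)), Finset.sum_const,
      Finset.card_univ, ← Nat.cast_smul_eq_nsmul ℝ]
  have hmean :
      m⁻¹ • (fun _ => 1) - Pi.single k 1 = m⁻¹ • ∑ j, (Pi.single j 1 - Pi.single k 1) := by
    rw [hsum, smul_sub, smul_smul, inv_mul_cancel₀ hm.ne', one_smul]
  calc q (m⁻¹ • (fun _ => 1) - Pi.single k 1)
      = m⁻¹ * q (∑ j, (Pi.single j 1 - Pi.single k 1)) := by
        rw [hmean, map_smul_eq_mul, Real.norm_of_nonneg (inv_nonneg.mpr hm.le)]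
    _ ≤ m⁻¹ * ∑ j, q (Pi.single j 1 - Pi.single k 1) := by
        gcongr
        exact Finset.le_sum_of_subadditive q (map_zero q).le (map_add_le_add q) _ _
    _ ≤ m⁻¹ * (m * c) := by
        gcongr
        calc ∑ j, q (Pi.single j 1 - Pi.single k 1) ≤ Finset.univ.card • c :=
              Finset.sum_le_card_nsmul _ _ c fun j _ => hc j
          _ = m * c := by rw [Finset.card_univ, nsmul_eq_mul]
    _ = c := inv_mul_cancel_left₀ hm.ne' c

end Seminorm

def IsNorm.toSeminorm {n : ℕ} {N : (Fin n → ℝ) → ℝ} (hN : IsNorm N) : Seminorm ℝ (Fin n → ℝ) :=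
  Seminorm.of N hN.2.2 fun a x => by rw [hN.2.1, Real.norm_eq_abs]

@[simp]
lemma IsNorm.toSeminorm_apply {n : ℕ} {N : (Fin n → ℝ) → ℝ} (hN : IsNorm N) (x : Fin n → ℝ) :
    hN.toSeminorm x = N x := rfl

namespace PermInvariant

variable {n : ℕ} {N : (Fin n → ℝ) → ℝ}

lemma map_single_sub_single (hN : PermInvariant N) {i j i' j' : Fin n} (hij : i ≠ j)
    (hij' : i' ≠ j') :
    N (Pi.single i 1 - Pi.single j 1) = N (Pi.single i' 1 - Pi.single j' 1) := by
  obtain ⟨σ, rfl, rfl⟩ := MulAction.is_two_pretransitive_iff.mp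
    (Equiv.Perm.isMultiplyPretransitive (Fin n) 2) hij hij'
  rw [← hN σ (Pi.single (σ • i) 1 - Pi.single (σ • j) 1)]
  congr 1
  ext k
  simp [Pi.single_apply, Equiv.Perm.smul_def, eq_comm]

lemma map_smul_one_sub_single (hN : PermInvariant N) (t : ℝ) (i i' : Fin n) :
    N (t • (fun _ => 1) - Pi.single i 1) = N (t • (fun _ => 1) - Pi.single i' 1) := by
  rw [← hN (Equiv.swap i i')]
  congr 1
  ext k
  simp [Pi.single_apply, Equiv.swap_apply_eq_iff]

end PermInvariant

/-- For a permutation-invariant norm `N` on `ℝ^n` (`n ≥ 2`) there exists `t ∈ ℝ` such that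
`t·(1,…,1)` is at distance `N(e₁ − e₂)` from each standard basis vector `eᵢ`; moreover the
standard basis vectors are pairwise at distance `N(e₁ − e₂)`, so the `n + 1` points
`e₁, …, eₙ, t·(1,…,1)` are pairwise equidistant. -/
theorem exists_apex_of_permInvariant (n : ℕ) (hn : 2 ≤ n)
    (N : (Fin n → ℝ) → ℝ) (hN : IsNorm N) (hperm : PermInvariant N) :
    ∃ t : ℝ,
      (∀ i : Fin n,
        N (t • (fun _ => (1 : ℝ)) - Pi.single i 1) =
          N (Pi.single (⟨0, by omega⟩ : Fin n) 1 - Pi.single (⟨1, by omega⟩ : Fin n) 1)) ∧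
      (∀ i j : Fin n, i ≠ j →
        N (Pi.single i 1 - Pi.single j 1) =
          N (Pi.single (⟨0, by omega⟩ : Fin n) 1 - Pi.single (⟨1, by omega⟩ : Fin n) 1)) := by
  set i₀ : Fin n := ⟨0, by omega⟩
  set i₁ : Fin n := ⟨1, by omega⟩
  have h01 : i₀ ≠ i₁ := Fin.ne_of_val_ne zero_ne_one
  have hpair : ∀ i j : Fin n, i ≠ j →
      N (Pi.single i 1 - Pi.single j 1) = N (Pi.single i₀ 1 - Pi.single i₁ 1) :=
    fun i j hij => hperm.map_single_sub_single hij h01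
  have hone : 0 < N fun _ => 1 :=
    (apply_nonneg hN.toSeminorm _).lt_of_ne' fun h => one_ne_zero (congrFun ((hN.1 _).mp h) i₀)
  have hmean :
      N ((n : ℝ)⁻¹ • (fun _ => 1) - Pi.single i₀ 1) ≤ N (Pi.single i₀ 1 - Pi.single i₁ 1) := by
    simpa using hN.toSeminorm.apply_inv_card_smul_sub_single_le i₀ fun j => by
      rcases eq_or_ne j i₀ with rfl | hj
      · rw [sub_self, ← hN.toSeminorm_apply, map_zero]
        exact apply_nonneg hN.toSeminorm _
      · exact (hpair j i₀ hj).le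
  obtain ⟨t, ht⟩ := hN.toSeminorm.exists_apply_smul_sub_eq (w := Pi.single i₀ 1) hone hmean
  exact ⟨t, fun i => (hperm.map_smul_one_sub_single t i i₀).trans ht, hpair⟩
end

section
/- Let n ≥ 1 and let N_k (k = 1, 2, 3, …) and N be norms on ℝ^n such that N_k(x) → N(x) as k → ∞ for every x ∈ ℝ^n. Suppose that for every k there exist n+1 points p_0^k, p_1^k, …, p_n^k in ℝ^n with N_k(p_i^k − p_j^k) = 1 for all i ≠ j. Then there exist n+1 points q_0, q_1, …, q_n in ℝ^n with N(q_i − q_j) = 1 for all i ≠ j. -/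
open Filter Topology

section IsNormAux

variable {n : ℕ} {N : (Fin n → ℝ) → ℝ}

lemma IsNorm.zero' (h : IsNorm N) : N 0 = 0 := (h.1 0).mpr rfl

lemma IsNorm.neg' (h : IsNorm N) (x : Fin n → ℝ) : N (-x) = N x := by
  have := h.2.1 (-1) x
  simpa using this

lemma IsNorm.nonneg' (h : IsNorm N) (x : Fin n → ℝ) : 0 ≤ N x := by
  have h1 := h.2.2 x (-x)
  rw [add_neg_cancel, h.zero', h.neg' x] at h1
  linarith

lemma IsNorm.sum_le (h : IsNorm N) {ι : Type*} (s : Finset ι) (f : ι → (Fin n → ℝ)) :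
    N (∑ i ∈ s, f i) ≤ ∑ i ∈ s, N (f i) := by
  classical
  induction s using Finset.cons_induction with
  | empty => simp [h.zero']
  | cons a s ha ih =>
    rw [Finset.sum_cons, Finset.sum_cons]
    exact (h.2.2 _ _).trans (by linarith)

/-- An upper Lipschitz constant for a norm on `ℝ^n`. -/
noncomputable def normC {n : ℕ} (N : (Fin n → ℝ) → ℝ) : ℝ :=
  ∑ j : Fin n, N (fun m => if j = m then (1:ℝ) else 0)

lemma IsNorm.le_C (h : IsNorm N) (x : Fin n → ℝ) : N x ≤ normC N * ‖x‖ := by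
  classical
  calc N x = N (∑ j : Fin n, x j • (fun m => if j = m then (1:ℝ) else 0)) := by
        conv_lhs => rw [pi_eq_sum_univ x]
    _ ≤ ∑ j : Fin n, N (x j • (fun m => if j = m then (1:ℝ) else 0)) := h.sum_le _ _
    _ = ∑ j : Fin n, |x j| * N (fun m => if j = m then (1:ℝ) else 0) := by
        simp only [h.2.1]
    _ ≤ ∑ j : Fin n, N (fun m => if j = m then (1:ℝ) else 0) * ‖x‖ := by
        apply Finset.sum_le_sum
        intro j _
        rw [mul_comm]
        apply mul_le_mul_of_nonneg_left _ (h.nonneg' _)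
        simpa [Real.norm_eq_abs] using norm_le_pi_norm x j
    _ = normC N * ‖x‖ := by simp only [normC, Finset.sum_mul]

lemma IsNorm.abs_sub' (h : IsNorm N) (x y : Fin n → ℝ) : |N x - N y| ≤ N (x - y) := by
  have hsymm : N (y - x) = N (x - y) := by rw [← neg_sub x y, h.neg']
  have h1 : N x ≤ N y + N (x - y) := by
    have e1 : y + (x - y) = x := by abel
    have := h.2.2 y (x - y)
    rwa [e1] at this
  have h2 : N y ≤ N x + N (x - y) := by
    have e2 : x + (y - x) = y := by abel
    have := h.2.2 x (y - x)
    rw [e2, hsymm] at this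
    exact this
  rw [abs_le]
  constructor <;> linarith [h.nonneg' (x - y)]

lemma IsNorm.continuous' (h : IsNorm N) : Continuous N := by
  apply LipschitzWith.continuous (K := Real.toNNReal (normC N))
  apply LipschitzWith.of_dist_le_mul
  intro x y
  rw [Real.dist_eq, dist_eq_norm]
  calc |N x - N y| ≤ N (x - y) := h.abs_sub' x y
    _ ≤ normC N * ‖x - y‖ := h.le_C _
    _ ≤ Real.toNNReal (normC N) * ‖x - y‖ := by
        gcongr
        exact Real.le_coe_toNNReal _

end IsNormAux

set_option maxHeartbeats 2000000 in
/-- If norms `N_k` on `ℝ^n` converge pointwise to a norm `N`, and for each `k` there are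
`n + 1` points that are pairwise at `N_k`-distance `1`, then there are `n + 1` points
pairwise at `N`-distance `1`. -/
theorem equilateral_limit_of_pointwise_convergence (n : ℕ) (hn : 1 ≤ n)
    (Nk : ℕ → (Fin n → ℝ) → ℝ) (N : (Fin n → ℝ) → ℝ)
    (hNk : ∀ k, IsNorm (Nk k)) (hN : IsNorm N)
    (hconv : ∀ x : Fin n → ℝ,
      Filter.Tendsto (fun k => Nk k x) Filter.atTop (nhds (N x)))
    (hequi : ∀ k, ∃ p : Fin (n + 1) → (Fin n → ℝ),
      ∀ i j : Fin (n + 1), i ≠ j → Nk k (p i - p j) = 1) :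
    ∃ q : Fin (n + 1) → (Fin n → ℝ),
      ∀ i j : Fin (n + 1), i ≠ j → N (q i - q j) = 1 := by
  classical
  haveI : Nonempty (Fin n) := ⟨⟨0, hn⟩⟩
  -- a uniform upper Lipschitz constant M for all the norms
  obtain ⟨B, hB⟩ : ∃ B, ∀ k, normC (Nk k) ≤ B := by
    have ht : Tendsto (fun k => normC (Nk k)) atTop (𝓝 (normC N)) := by
      simp only [normC]
      exact tendsto_finset_sum _ (fun j _ => hconv _)
    obtain ⟨B, hB⟩ := ht.bddAbove_range
    exact ⟨B, fun k => hB (Set.mem_range_self k)⟩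
  set M : ℝ := max B (normC N) + 1 with hMdef
  have hCN0 : 0 ≤ normC N := Finset.sum_nonneg fun j _ => hN.nonneg' _
  have hM0 : 0 < M := by
    have : (0:ℝ) ≤ max B (normC N) := le_trans hCN0 (le_max_right _ _)
    linarith
  have hMN : ∀ x, N x ≤ M * ‖x‖ := by
    intro x
    refine (hN.le_C x).trans (mul_le_mul_of_nonneg_right ?_ (norm_nonneg _))
    have := le_max_right B (normC N); linarith
  have hMk : ∀ k x, Nk k x ≤ M * ‖x‖ := by
    intro k x
    refine ((hNk k).le_C x).trans (mul_le_mul_of_nonneg_right ?_ (norm_nonneg _))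
    have := le_max_left B (normC N); have := hB k; linarith
  have hMklip : ∀ k x y, |Nk k x - Nk k y| ≤ M * ‖x - y‖ :=
    fun k x y => ((hNk k).abs_sub' x y).trans (hMk k _)
  have hMNlip : ∀ x y, |N x - N y| ≤ M * ‖x - y‖ :=
    fun x y => (hN.abs_sub' x y).trans (hMN _)
  -- minimum of N on the unit sphere
  have hS : IsCompact (Metric.sphere (0 : Fin n → ℝ) 1) := isCompact_sphere 0 1
  have hSne : (Metric.sphere (0 : Fin n → ℝ) 1).Nonempty :=
    NormedSpace.sphere_nonempty.mpr zero_le_one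
  obtain ⟨x0, hx0S, hx0min⟩ := hS.exists_isMinOn hSne hN.continuous'.continuousOn
  have hx0ne : x0 ≠ 0 := by
    intro h
    rw [mem_sphere_iff_norm] at hx0S
    simp [h] at hx0S
  set c0 : ℝ := N x0 with hc0def
  have hc0 : 0 < c0 := by
    rcases (hN.nonneg' x0).lt_or_eq with h | h
    · exact h
    · exact absurd ((hN.1 x0).mp h.symm) hx0ne
  have hsphere_min : ∀ x : Fin n → ℝ, ‖x‖ = 1 → c0 ≤ N x := by
    intro x hx
    exact isMinOn_iff.mp hx0min x (by rwa [mem_sphere_iff_norm, sub_zero])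
  -- uniform lower bound on the unit sphere for large k
  obtain ⟨K, hK⟩ : ∃ K, ∀ k ≥ K, ∀ x : Fin n → ℝ, ‖x‖ = 1 → c0/4 ≤ Nk k x := by
    obtain ⟨t, htfin, htcov⟩ :=
      Metric.totallyBounded_iff.mp hS.totallyBounded (c0/(4*M)) (by positivity)
    have hev : ∀ᶠ k in atTop, ∀ y ∈ t, |Nk k y - N y| < c0/4 := by
      rw [htfin.eventually_all]
      intro y _
      have h2 := Metric.tendsto_atTop.mp (hconv y) (c0/4) (by positivity)
      obtain ⟨K, hK'⟩ := h2
      rw [eventually_atTop]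
      exact ⟨K, fun k hk => by rw [← Real.dist_eq]; exact hK' k hk⟩
    obtain ⟨K, hK'⟩ := eventually_atTop.mp hev
    refine ⟨K, fun k hk x hx => ?_⟩
    have hxS : x ∈ Metric.sphere (0 : Fin n → ℝ) 1 := by
      rwa [mem_sphere_iff_norm, sub_zero]
    obtain ⟨y, hyt, hxy⟩ : ∃ y ∈ t, dist x y < c0/(4*M) := by
      have := htcov hxS
      simp only [Set.mem_iUnion] at this
      obtain ⟨y, hy, hball⟩ := this
      exact ⟨y, hy, Metric.mem_ball.mp hball⟩
    have h5 : ‖x - y‖ < c0/(4*M) := by rwa [← dist_eq_norm]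
    have h5' : ‖y - x‖ < c0/(4*M) := by rwa [norm_sub_rev]
    have hMne : M * (c0/(4*M)) = c0/4 := by field_simp
    have b1 : M * ‖x - y‖ < c0/4 := by
      rw [← hMne]; exact mul_lt_mul_of_pos_left h5 hM0
    have b2 : M * ‖y - x‖ < c0/4 := by
      rw [← hMne]; exact mul_lt_mul_of_pos_left h5' hM0
    have l1 : N y - Nk k y ≤ |Nk k y - N y| := by
      rw [abs_sub_comm]; exact le_abs_self _
    have l2 : N x - N y ≤ |N y - N x| := by
      rw [abs_sub_comm]; exact le_abs_self _
    have l3 : Nk k y - Nk k x ≤ |Nk k x - Nk k y| := by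
      rw [abs_sub_comm]; exact le_abs_self _
    have h2 := hK' k hk y hyt
    have h3 := hMNlip y x
    have h1 := hMklip k x y
    have h4 := hsphere_min x hx
    have A1 : Nk k y - Nk k x < c0/4 := lt_of_le_of_lt (l3.trans h1) b1
    have A2 : N y - Nk k y < c0/4 := lt_of_le_of_lt l1 h2
    have A3 : N x - N y < c0/4 := lt_of_le_of_lt (l2.trans h3) b2
    linarith
  -- lower bound for all vectors, for k ≥ K
  have hlow : ∀ k ≥ K, ∀ x : Fin n → ℝ, (c0/4) * ‖x‖ ≤ Nk k x := by
    intro k hk x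
    rcases eq_or_ne x 0 with rfl | hx
    · have h0 := (hNk k).zero'
      simp [h0]
    · have hnx : 0 < ‖x‖ := norm_pos_iff.mpr hx
      have hu : ‖(‖x‖⁻¹ • x)‖ = 1 := by
        rw [norm_smul, Real.norm_eq_abs, abs_of_pos (inv_pos.mpr hnx)]
        field_simp
      have hlb := hK k hk _ hu
      have heq : Nk k (‖x‖⁻¹ • x) = ‖x‖⁻¹ * Nk k x := by
        rw [(hNk k).2.1, abs_of_pos (inv_pos.mpr hnx)]
      rw [heq] at hlb
      calc (c0/4) * ‖x‖ ≤ (‖x‖⁻¹ * Nk k x) * ‖x‖ :=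
            mul_le_mul_of_nonneg_right hlb hnx.le
        _ = Nk k x := by field_simp
  -- the translated equilateral points, shifted by K
  choose p hp using hequi
  set q : ℕ → Fin (n + 1) → (Fin n → ℝ) := fun m i => p (K + m) i - p (K + m) 0 with hqdef
  have hq0 : ∀ m, q m 0 = 0 := fun m => sub_self _
  have hqd : ∀ m (i j : Fin (n + 1)), i ≠ j → Nk (K + m) (q m i - q m j) = 1 := by
    intro m i j hij
    have e : q m i - q m j = p (K + m) i - p (K + m) j := by
      simp only [hqdef]; abel
    rw [e]
    exact hp (K + m) i j hij
  have hqb : ∀ m, q m ∈ Metric.closedBall (0 : Fin (n + 1) → Fin n → ℝ) (4/c0) := by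
    intro m
    rw [Metric.mem_closedBall, dist_zero_right]
    rw [pi_norm_le_iff_of_nonneg (by positivity)]
    intro i
    rcases eq_or_ne i 0 with rfl | hi
    · rw [hq0]; simp; positivity
    · have h1 : Nk (K + m) (q m i) = 1 := by
        have := hqd m i 0 hi
        rwa [hq0, sub_zero] at this
      have h2 := hlow (K + m) (Nat.le_add_right K m) (q m i)
      rw [h1] at h2
      rw [le_div_iff₀ hc0]
      nlinarith [norm_nonneg (q m i)]
  -- extract a convergent subsequence
  obtain ⟨a, -, φ, hφ, hlim⟩ :=
    (isCompact_closedBall (0 : Fin (n + 1) → Fin n → ℝ) (4/c0)).tendsto_subseq hqb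
  refine ⟨a, fun i j hij => ?_⟩
  set w : Fin n → ℝ := a i - a j with hwdef
  have hz : Tendsto (fun m => q (φ m) i - q (φ m) j) atTop (𝓝 w) := by
    have hi : Tendsto (fun m => q (φ m) i) atTop (𝓝 (a i)) :=
      ((continuous_apply i).tendsto a).comp hlim
    have hj : Tendsto (fun m => q (φ m) j) atTop (𝓝 (a j)) :=
      ((continuous_apply j).tendsto a).comp hlim
    exact hi.sub hj
  have hmain : Tendsto (fun m => Nk (K + φ m) (q (φ m) i - q (φ m) j)) atTop (𝓝 (N w)) := by
    rw [tendsto_iff_dist_tendsto_zero]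
    simp only [Real.dist_eq]
    apply squeeze_zero (fun m => abs_nonneg _)
      (g := fun m => M * ‖(q (φ m) i - q (φ m) j) - w‖ + |Nk (K + φ m) w - N w|)
    · intro m
      calc |Nk (K + φ m) (q (φ m) i - q (φ m) j) - N w|
          ≤ |Nk (K + φ m) (q (φ m) i - q (φ m) j) - Nk (K + φ m) w|
            + |Nk (K + φ m) w - N w| := abs_sub_le _ _ _
        _ ≤ M * ‖(q (φ m) i - q (φ m) j) - w‖ + |Nk (K + φ m) w - N w| := by
            have := hMklip (K + φ m) (q (φ m) i - q (φ m) j) w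
            linarith
    · have t1 : Tendsto (fun m => M * ‖(q (φ m) i - q (φ m) j) - w‖) atTop (𝓝 0) := by
        have : Tendsto (fun m => (q (φ m) i - q (φ m) j) - w) atTop (𝓝 0) := by
          have := hz.sub_const w
          simpa using this
        have hnrm := this.norm
        simp only [norm_zero] at hnrm
        simpa using hnrm.const_mul M
      have t2 : Tendsto (fun m => |Nk (K + φ m) w - N w|) atTop (𝓝 0) := by
        have hKφ : Tendsto (fun m => K + φ m) atTop atTop :=
          tendsto_atTop_mono (fun m => Nat.le_add_left (φ m) K) hφ.tendsto_atTop
        have h2 : Tendsto (fun m => Nk (K + φ m) w) atTop (𝓝 (N w)) :=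
          (hconv w).comp hKφ
        have := tendsto_iff_dist_tendsto_zero.mp h2
        simpa only [Real.dist_eq] using this
      simpa using t1.add t2
  have hone : Tendsto (fun _ : ℕ => (1:ℝ)) atTop (𝓝 (N w)) := by
    have e : (fun m => Nk (K + φ m) (q (φ m) i - q (φ m) j)) = fun _ : ℕ => (1:ℝ) := by
      funext m
      exact hqd (φ m) i j hij
    rwa [e] at hmain
  exact (tendsto_nhds_unique hone tendsto_const_nhds)
end

section
/- Let n ≥ 2 and let f_1, …, f_n : [0, ∞) → [0, ∞) be convex functions with f_i(0) = 0 that are strictly increasing on [0, ∞) and satisfy f_i(x) → ∞ as x → ∞. Suppose N is a norm on ℝ^n whose closed unit ball equals { x ∈ ℝ^n : Σ_{i=1}^n f_i(|x_i|) ≤ 1 }, and let c_1, …, c_n > 0 satisfy f_i(c_i) = 1/2 for each i. Then N(c_i·e_i − c_j·e_j) = 1 for all i ≠ j, where e_1, …, e_n are the standard basis vectors; that is, the points c_1·e_1, …, c_n·e_n are pairwise equidistant with common distance 1. -/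
lemma sum_two_aux {n : ℕ} (g : Fin n → ℝ) (i j : Fin n) (hij : i ≠ j)
    (h : ∀ k, k ≠ i → k ≠ j → g k = 0) : ∑ k, g k = g i + g j := by
  rw [← Finset.add_sum_erase _ g (Finset.mem_univ i),
    ← Finset.add_sum_erase _ g (Finset.mem_erase.2 ⟨hij.symm, Finset.mem_univ j⟩)]
  rw [Finset.sum_eq_zero, add_zero]
  intro k hk
  simp only [Finset.mem_erase] at hk
  exact h k hk.2.1 hk.1

/-- In a Musielak–Orlicz space with strictly increasing, finite-valued coordinate
functions, if `cᵢ > 0` satisfies `fᵢ(cᵢ) = 1/2` for every `i`, then the points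
`c₁e₁, …, cₙeₙ` are pairwise equidistant with common distance `1`. -/
theorem half_points_equilateral_of_musielakOrlicz (n : ℕ) (hn : 2 ≤ n)
    (f : Fin n → ℝ → ℝ)
    (hf0 : ∀ i, f i 0 = 0)
    (hconv : ∀ i, ConvexOn ℝ (Set.Ici (0 : ℝ)) (f i))
    (hmono : ∀ i, StrictMonoOn (f i) (Set.Ici (0 : ℝ)))
    (htop : ∀ i, Filter.Tendsto (f i) Filter.atTop Filter.atTop)
    (N : (Fin n → ℝ) → ℝ) (hN : IsNorm N)
    (hball : ∀ x : Fin n → ℝ, N x ≤ 1 ↔ ∑ i, f i |x i| ≤ 1)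
    (c : Fin n → ℝ) (hc : ∀ i, 0 < c i) (hfc : ∀ i, f i (c i) = 1 / 2) :
    ∀ i j : Fin n, i ≠ j →
      N (Pi.single i (c i) - Pi.single j (c j)) = 1 := by
  intro i j hij
  obtain ⟨hN0, hNsmul, hNadd⟩ := hN
  set x : Fin n → ℝ := Pi.single i (c i) - Pi.single j (c j) with hx
  have hxk : ∀ k, x k = if k = i then c i else if k = j then - c j else 0 := by
    intro k
    simp only [hx, Pi.sub_apply, Pi.single_apply]
    split_ifs with h1 h2 <;> simp_all
  -- For t ≥ 0, the Orlicz sum of t • x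
  have hsum : ∀ t : ℝ, 0 ≤ t →
      ∑ k, f k |(t • x) k| = f i (t * c i) + f j (t * c j) := by
    intro t ht
    rw [sum_two_aux _ i j hij]
    · congr 1
      · rw [Pi.smul_apply, hxk, if_pos rfl, smul_eq_mul, abs_of_nonneg
          (mul_nonneg ht (hc i).le)]
      · rw [Pi.smul_apply, hxk, if_neg hij.symm, if_pos rfl, smul_eq_mul,
          mul_neg, abs_neg, abs_of_nonneg (mul_nonneg ht (hc j).le)]
    · intro k hki hkj
      rw [Pi.smul_apply, hxk, if_neg hki, if_neg hkj, smul_zero, abs_zero, hf0]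
  -- N x ≤ 1
  have hle : N x ≤ 1 := by
    rw [hball]
    have := hsum 1 zero_le_one
    rw [one_smul] at this
    rw [this, one_mul, one_mul, hfc, hfc]
    norm_num
  -- N x ≥ 0
  have hnonneg : 0 ≤ N x := by
    have h0 : N 0 = 0 := (hN0 0).2 rfl
    have := hNadd x (-x)
    rw [add_neg_cancel, h0] at this
    have hneg : N (-x) = N x := by
      have := hNsmul (-1) x
      simpa using this
    linarith [this, hneg ▸ this]
  -- N x ≥ 1
  have hge : 1 ≤ N x := by
    by_contra h
    push_neg at h
    set t : ℝ := 2 / (1 + N x) with ht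
    have hpos : 0 < 1 + N x := by linarith
    have ht1 : 1 < t := by
      rw [ht, lt_div_iff₀ hpos]; linarith
    have htN : N (t • x) ≤ 1 := by
      rw [hNsmul, abs_of_pos (by linarith : (0:ℝ) < t), ht, div_mul_eq_mul_div,
        div_le_one hpos]
      linarith
    rw [hball, hsum t (by linarith)] at htN
    have hi : f i (c i) < f i (t * c i) :=
      (hmono i) (Set.mem_Ici.2 (hc i).le)
        (Set.mem_Ici.2 (mul_nonneg (by linarith) (hc i).le)) (by nlinarith [hc i])
    have hj : f j (c j) < f j (t * c j) :=
      (hmono j) (Set.mem_Ici.2 (hc j).le)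
        (Set.mem_Ici.2 (mul_nonneg (by linarith) (hc j).le)) (by nlinarith [hc j])
    rw [hfc] at hi
    rw [hfc] at hj
    linarith
  linarith
end

section
/- Let n ≥ 1, let a_1, …, a_n ∈ ℝ, and let X = { x ∈ ℝ^n : a_1 x_1 + ⋯ + a_n x_n = 0 }, regarded as a subspace of ℓ_∞^n (ℝ^n with the supremum norm). Let 1 ≤ k ≤ n be an integer such that there is a partition {1, …, n} = A ∪ B into disjoint sets with |A| = k and Σ_{i ∈ A} |a_i| ≥ Σ_{i ∈ B} |a_i|. Then there exists a set S ⊆ X of 2^{n−k} points such that ‖x − y‖_∞ = 2 for all distinct x, y ∈ S; in particular, the equilateral dimension of X with the supremum norm is at least 2^{n−k}. -/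
/-- Let `X = {x ∈ ℝ^n : a₁x₁ + ⋯ + aₙxₙ = 0}` be a hyperplane in `ℓ∞ⁿ` (here `Fin n → ℝ`
carries the supremum norm) and let `1 ≤ k ≤ n` admit a partition `{1,…,n} = A ∪ B` with
`|A| = k` and `Σ_{i∈B} |aᵢ| ≤ Σ_{i∈A} |aᵢ|`. Then `X` contains `2^(n−k)` points which are
pairwise at sup-distance `2`; in particular `e(X) ≥ 2^(n−k)`. -/
theorem equilateral_hyperplane_linf (n : ℕ) (hn : 1 ≤ n) (a : Fin n → ℝ)
    (k : ℕ) (hk1 : 1 ≤ k) (hkn : k ≤ n)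
    (A B : Finset (Fin n)) (hdisj : Disjoint A B) (hcover : A ∪ B = Finset.univ)
    (hcard : A.card = k) (hsum : ∑ i ∈ B, |a i| ≤ ∑ i ∈ A, |a i|) :
    ∃ S : Finset (Fin n → ℝ), S.card = 2 ^ (n - k) ∧
      (∀ x ∈ S, ∑ i, a i * x i = 0) ∧
      ∀ x ∈ S, ∀ y ∈ S, x ≠ y → ‖x - y‖ = 2 := by
  classical
  set SA := ∑ i ∈ A, |a i| with hSA
  have hSA0 : 0 ≤ SA := Finset.sum_nonneg fun i _ => abs_nonneg _
  set ε : Finset (Fin n) → Fin n → ℝ := fun s i => if i ∈ s then 1 else -1 with hε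
  set c : Finset (Fin n) → ℝ := fun s => -(∑ i ∈ B, a i * ε s i) / SA with hc
  set x : Finset (Fin n) → Fin n → ℝ :=
    fun s i => if i ∈ B then ε s i else c s * Real.sign (a i) with hx
  have hεabs : ∀ s i, |ε s i| = 1 := by
    intro s i; simp only [hε]; split <;> simp
  have hTle : ∀ s, |∑ i ∈ B, a i * ε s i| ≤ SA := by
    intro s
    calc |∑ i ∈ B, a i * ε s i| ≤ ∑ i ∈ B, |a i * ε s i| :=
          Finset.abs_sum_le_sum_abs _ _
      _ = ∑ i ∈ B, |a i| := by
          refine Finset.sum_congr rfl fun i _ => ?_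
          rw [abs_mul, hεabs, mul_one]
      _ ≤ SA := hsum
  have hcle : ∀ s, |c s| ≤ 1 := by
    intro s
    rcases eq_or_lt_of_le hSA0 with h | h
    · simp [hc, ← h]
    · rw [hc]
      simp only
      rw [abs_div, abs_neg, abs_of_pos h, div_le_one h]
      exact hTle s
  have hsign : ∀ r : ℝ, |Real.sign r| ≤ 1 := by
    intro r
    rcases lt_trichotomy r 0 with h | h | h
    · simp [Real.sign_of_neg h]
    · simp [h, Real.sign_zero]
    · simp [Real.sign_of_pos h]
  -- each point lies on the hyperplane
  have hxsum : ∀ s, ∑ i, a i * x s i = 0 := by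
    intro s
    have hsplit : ∑ i, a i * x s i = ∑ i ∈ A, a i * x s i + ∑ i ∈ B, a i * x s i := by
      rw [← Finset.sum_union hdisj, hcover]
    have hA : ∑ i ∈ A, a i * x s i = c s * SA := by
      rw [hSA, Finset.mul_sum]
      refine Finset.sum_congr rfl fun i hi => ?_
      have hiB : i ∉ B := Finset.disjoint_left.mp hdisj hi
      simp only [hx, if_neg hiB]
      have hms : a i * Real.sign (a i) = |a i| := by
        rcases lt_trichotomy (a i) 0 with h | h | h
        · rw [Real.sign_of_neg h, abs_of_neg h]; ring
        · simp [h, Real.sign_zero]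
        · rw [Real.sign_of_pos h, abs_of_pos h]; ring
      rw [← hms]; ring
    have hB : ∑ i ∈ B, a i * x s i = ∑ i ∈ B, a i * ε s i := by
      refine Finset.sum_congr rfl fun i hi => ?_
      simp [hx, hi]
    rw [hsplit, hA, hB]
    rcases eq_or_lt_of_le hSA0 with h | h
    · have hT : ∑ i ∈ B, a i * ε s i = 0 := by
        have h1 : |∑ i ∈ B, a i * ε s i| ≤ 0 := by rw [h]; exact hTle s
        exact abs_eq_zero.mp (le_antisymm h1 (abs_nonneg _))
      rw [hT, ← h]; ring
    · have : c s * SA = -(∑ i ∈ B, a i * ε s i) := div_mul_cancel₀ _ (ne_of_gt h)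
      rw [this]; ring
  -- injectivity of the construction on subsets of B
  have hinj : ∀ s ∈ B.powerset, ∀ t ∈ B.powerset, x s = x t → s = t := by
    intro s hs t ht hxy
    rw [Finset.mem_powerset] at hs ht
    ext i
    by_cases hiB : i ∈ B
    · constructor
      · intro his
        by_contra hit
        have := congrFun hxy i
        simp only [hx, if_pos hiB, hε, if_pos his, if_neg hit] at this
        norm_num at this
      · intro hit
        by_contra his
        have := congrFun hxy i
        simp only [hx, if_pos hiB, hε, if_neg his, if_pos hit] at this
        norm_num at this
    · constructor
      · intro his; exact absurd (hs his) hiB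
      · intro hit; exact absurd (ht hit) hiB
  -- the distance
  have hdist : ∀ s ∈ B.powerset, ∀ t ∈ B.powerset, s ≠ t → ‖x s - x t‖ = 2 := by
    intro s hs t ht hst
    rw [Finset.mem_powerset] at hs ht
    have hub : ∀ i, ‖(x s - x t) i‖ ≤ 2 := by
      intro i
      simp only [Pi.sub_apply, Real.norm_eq_abs]
      by_cases hiB : i ∈ B
      · simp only [hx, if_pos hiB]
        have h1 := hεabs s i
        have h2 := hεabs t i
        calc |ε s i - ε t i| ≤ |ε s i| + |ε t i| := abs_sub _ _
          _ ≤ 2 := by rw [h1, h2]; norm_num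
      · simp only [hx, if_neg hiB]
        have : c s * Real.sign (a i) - c t * Real.sign (a i)
            = (c s - c t) * Real.sign (a i) := by ring
        rw [this, abs_mul]
        have h1 : |c s - c t| ≤ 2 := by
          calc |c s - c t| ≤ |c s| + |c t| := abs_sub _ _
            _ ≤ 2 := by linarith [hcle s, hcle t]
        calc |c s - c t| * |Real.sign (a i)| ≤ 2 * 1 :=
              mul_le_mul h1 (hsign _) (abs_nonneg _) (by norm_num)
          _ = 2 := by norm_num
    have hwit : ∃ i, |(x s - x t) i| = 2 := by
      have hne : ∃ i, ¬ (i ∈ s ↔ i ∈ t) := by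
        by_contra h
        push_neg at h
        exact hst (Finset.ext fun i => h i)
      obtain ⟨i, hi⟩ := hne
      by_cases his : i ∈ s
      · have hit : i ∉ t := fun hit => hi (iff_of_true his hit)
        have hiB : i ∈ B := hs his
        refine ⟨i, ?_⟩
        simp only [Pi.sub_apply, hx, if_pos hiB, hε, if_pos his, if_neg hit]
        norm_num
      · have hit : i ∈ t := by
          by_contra hit
          exact hi (iff_of_false his hit)
        have hiB : i ∈ B := ht hit
        refine ⟨i, ?_⟩
        simp only [Pi.sub_apply, hx, if_pos hiB, hε, if_neg his, if_pos hit]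
        norm_num
    obtain ⟨i, hi⟩ := hwit
    refine le_antisymm ?_ ?_
    · exact (pi_norm_le_iff_of_nonneg (by norm_num)).mpr hub
    · calc (2 : ℝ) = ‖(x s - x t) i‖ := by rw [Real.norm_eq_abs, hi]
        _ ≤ ‖x s - x t‖ := norm_le_pi_norm _ i
  -- assemble
  refine ⟨(B.powerset).image x, ?_, ?_, ?_⟩
  · rw [Finset.card_image_of_injOn hinj, Finset.card_powerset]
    congr 1
    have hiun : A.card + B.card = n := by
      rw [← Finset.card_union_of_disjoint hdisj, hcover, Finset.card_univ, Fintype.card_fin]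
    omega
  · intro y hy
    obtain ⟨s, _, rfl⟩ := Finset.mem_image.mp hy
    exact hxsum s
  · intro y hy z hz hyz
    obtain ⟨s, hs, rfl⟩ := Finset.mem_image.mp hy
    obtain ⟨t, ht, rfl⟩ := Finset.mem_image.mp hz
    exact hdist s hs t ht (fun h => hyz (by rw [h]))
end

section
/- Let n ≥ 1 and let X be an (n−1)-dimensional linear subspace of ℓ_∞^n (ℝ^n with the supremum norm). Then there exist 2^{⌊n/2⌋} points in X that are pairwise equidistant in the supremum norm; that is, the equilateral dimension of X is at least 2^{⌊n/2⌋}. -/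
/-!
A subspace of codimension one meets every coordinate plane `span {eᵢ, eⱼ}` nontrivially, so for
the `⌊n/2⌋` disjoint coordinate pairs `{2k, 2k+1}` it contains unit vectors `vₖ` supported on
the `k`-th pair. Since the `vₖ` have disjoint supports, `‖∑ cₖ vₖ‖ = maxₖ |cₖ|` in `ℓ∞`. Hence
`c ↦ ∑ cₖ vₖ` maps the `2^⌊n/2⌋` vertices of the cube `{0,1}^⌊n/2⌋`, which are pairwise at
sup-distance `1`, to an equilateral set in the subspace.
-/

open Module Function

theorem Submodule.inf_ne_bot_of_finrank_lt_add {K V : Type*} [DivisionRing K] [AddCommGroup V]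
    [Module K V] [FiniteDimensional K V] {s t : Submodule K V}
    (h : finrank K V < finrank K s + finrank K t) : s ⊓ t ≠ ⊥ := by
  rw [← Submodule.one_le_finrank_iff]
  have := Submodule.finrank_sup_add_finrank_inf_eq s t
  have := (s ⊔ t).finrank_le
  omega

theorem exists_norm_eq_one_mem_support_subset_pair {κ : Type*} [Fintype κ] [DecidableEq κ]
    (X : Submodule ℝ (κ → ℝ)) (hX : Fintype.card κ ≤ finrank ℝ X + 1) {i j : κ} (hij : i ≠ j) :
    ∃ v ∈ X, ‖v‖ = 1 ∧ support v ⊆ {i, j} := by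
  set L := (LinearMap.single ℝ (fun _ : κ => ℝ) i).coprod (LinearMap.single ℝ _ j)
  have hL : Injective L := by
    rw [← LinearMap.ker_eq_bot, LinearMap.ker_eq_bot']
    rintro ⟨a, b⟩ h
    have hi := congrFun h i
    have hj := congrFun h j
    simp_all [L]
  have hrank : finrank ℝ (κ → ℝ) < finrank ℝ X + finrank ℝ L.range := by
    rw [LinearMap.finrank_range_of_inj hL, Module.finrank_prod, Module.finrank_self,
      Module.finrank_fintype_fun_eq_card]
    omega
  obtain ⟨w, ⟨hwX, a, rfl⟩, hw⟩ :=
    Submodule.exists_mem_ne_zero_of_ne_bot (Submodule.inf_ne_bot_of_finrank_lt_add hrank)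
  refine ⟨‖L a‖⁻¹ • L a, X.smul_mem _ hwX, norm_smul_inv_norm hw,
    (support_const_smul_subset _ _).trans ?_⟩
  refine (support_add _ _).trans (Set.union_subset ?_ ?_)
  · exact Pi.support_single_subset.trans (by simp)
  · exact Pi.support_single_subset.trans (by simp)

theorem norm_sum_smul_of_pairwise_disjoint_support {ι κ 𝕜 E : Type*} [Fintype ι] [Fintype κ]
    [NormedField 𝕜] [SeminormedAddCommGroup E] [NormedSpace 𝕜 E] {v : ι → κ → E}
    (hv : Pairwise (Disjoint on fun k => support (v k))) (hv1 : ∀ k, ‖v k‖ = 1) (c : ι → 𝕜) :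
    ‖∑ k, c k • v k‖ = ‖c‖ := by
  have hcoord : ∀ k t, v k t ≠ 0 → (∑ l, c l • v l) t = c k • v k t := fun k t ht => by
    have hvanish : ∀ l, l ≠ k → v l t = 0 := fun l hl =>
      notMem_support.mp fun htl => (hv hl).ne_of_mem htl ht rfl
    rw [Finset.sum_apply, Finset.sum_eq_single k (fun l _ hl => by simp [hvanish l hl]) (by simp)]
    rfl
  refine le_antisymm ((pi_norm_le_iff_of_nonneg (norm_nonneg c)).mpr fun t => ?_)
    ((pi_norm_le_iff_of_nonneg (norm_nonneg _)).mpr fun k => ?_)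
  · by_cases h : ∃ k, v k t ≠ 0
    · obtain ⟨k, hk⟩ := h
      rw [hcoord k t hk, norm_smul]
      calc ‖c k‖ * ‖v k t‖ ≤ ‖c‖ * ‖v k‖ :=
            mul_le_mul (norm_le_pi_norm c k) (norm_le_pi_norm (v k) t) (norm_nonneg _)
              (norm_nonneg _)
        _ = ‖c‖ := by rw [hv1, mul_one]
    · push Not at h
      simp [Finset.sum_apply, h]
  · have : Nonempty κ := by
      by_contra hκ
      rw [not_nonempty_iff] at hκ
      simpa [Subsingleton.elim (v k) 0] using hv1 k
    obtain ⟨t, ht⟩ := (IsGreatest.pi_norm (v k)).1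
    have ht0 : v k t ≠ 0 := fun h0 => by simp [h0, hv1] at ht
    calc ‖c k‖ = ‖c k • v k t‖ := by simp [norm_smul, ht, hv1]
      _ = ‖(∑ l, c l • v l) t‖ := by rw [hcoord k t ht0]
      _ ≤ ‖∑ l, c l • v l‖ := norm_le_pi_norm _ t

theorem norm_sub_natCast_eq_one_of_ne {ι : Type*} [Fintype ι] {b b' : ι → Fin 2} (h : b ≠ b') :
    ‖(fun k => (b k : ℝ)) - fun k => (b' k : ℝ)‖ = 1 := by
  have hcoord : ∀ x y : Fin 2, ‖(x : ℝ) - y‖ = if x = y then 0 else 1 := by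
    intro x y; fin_cases x <;> fin_cases y <;> simp
  obtain ⟨k, hk⟩ := Function.ne_iff.mp h
  refine le_antisymm ((pi_norm_le_iff_of_nonneg zero_le_one).mpr fun l => ?_) ?_
  · rw [Pi.sub_apply, hcoord]; split_ifs <;> norm_num
  · simpa [hcoord, hk] using norm_le_pi_norm ((fun k => (b k : ℝ)) - fun k => (b' k : ℝ)) k

theorem Submodule.exists_equilateral_of_pairwise_disjoint_support {κ : Type*} [Fintype κ]
    (X : Submodule ℝ (κ → ℝ)) {m : ℕ} {v : Fin m → κ → ℝ} (hvX : ∀ k, v k ∈ X)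
    (hv1 : ∀ k, ‖v k‖ = 1) (hv : Pairwise (Disjoint on fun k => support (v k))) :
    ∃ p : Fin (2 ^ m) → κ → ℝ, (∀ i, p i ∈ X) ∧ ∀ i j, i ≠ j → ‖p i - p j‖ = 1 := by
  set b : Fin (2 ^ m) → Fin m → ℝ := fun i k => (finFunctionFinEquiv.symm i k : ℝ)
  refine ⟨fun i => ∑ k, b i k • v k, fun i => X.sum_mem fun k _ => X.smul_mem _ (hvX k),
    fun i j hij => ?_⟩
  rw [← Finset.sum_sub_distrib]
  simp_rw [← sub_smul]
  exact (norm_sum_smul_of_pairwise_disjoint_support hv hv1 (b i - b j)).trans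
    (norm_sub_natCast_eq_one_of_ne (finFunctionFinEquiv.symm.injective.ne hij))

theorem equilateral_codim_one_subspace_linf_general (n : ℕ)
    (X : Submodule ℝ (Fin n → ℝ)) (hdim : Module.finrank ℝ X = n - 1) :
    ∃ p : Fin (2 ^ (n / 2)) → (Fin n → ℝ), (∀ i, p i ∈ X) ∧
      ∃ d : ℝ, 0 < d ∧ ∀ i j, i ≠ j → ‖p i - p j‖ = d := by
  have hX : Fintype.card (Fin n) ≤ finrank ℝ X + 1 := by rw [Fintype.card_fin, hdim]; omega
  let first (k : Fin (n / 2)) : Fin n := ⟨2 * k, by omega⟩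
  let second (k : Fin (n / 2)) : Fin n := ⟨2 * k + 1, by omega⟩
  choose v hvX hv1 hvsupp using fun k =>
    exists_norm_eq_one_mem_support_subset_pair X hX (i := first k) (j := second k)
      (by simp [first, second, Fin.ext_iff])
  have hv : Pairwise (Disjoint on fun k => support (v k)) := fun k l hkl =>
    Set.disjoint_of_subset (hvsupp k) (hvsupp l) <| by grind
  obtain ⟨p, hpX, hp⟩ := X.exists_equilateral_of_pairwise_disjoint_support hvX hv1 hv
  exact ⟨p, hpX, 1, one_pos, hp⟩

/-- Every `(n−1)`-dimensional linear subspace `X` of `ℓ∞ⁿ` (here `Fin n → ℝ` carries the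
supremum norm) contains `2^⌊n/2⌋` pairwise equidistant points; that is,
`e(X) ≥ 2^⌊n/2⌋`. -/
theorem equilateral_codim_one_subspace_linf (n : ℕ) (hn : 1 ≤ n)
    (X : Submodule ℝ (Fin n → ℝ)) (hdim : Module.finrank ℝ X = n - 1) :
    ∃ p : Fin (2 ^ (n / 2)) → (Fin n → ℝ), (∀ i, p i ∈ X) ∧
      ∃ d : ℝ, 0 < d ∧ ∀ i j, i ≠ j → ‖p i - p j‖ = d :=
  equilateral_codim_one_subspace_linf_general n X hdim
end
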